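/- Let μ : ℝ → ℂ be a unit-speed C² plane curve with Euclidean curvature κ_E(s) = Im(μ̄'(s) μ''(s))·(sign convention: κ_E = -Im(μ' μ̄'')). Then the mean curvature of the ideal cone f(s,t) = [[e^t + e^{-t}|μ|², -e^{-t}μ],[-e^{-t}μ̄, e^{-t}]] equals H(s,t) = -(1/2) e^{t} κ_E(s); in particular, along each line s = const (which is a unit-speed asymptotic geodesic in the parameter t) the mean curvature is proportional to e^t. -/

import Mathlib

open Matrix

/-!
The `s`-derivatives of the cone `fIC` and of its normal `nuIC` both have vanishing `(1,1)` entry,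
so their Minkowski pairings only see the off-diagonal entries. With `|μ'| = 1` this gives
`⟨f_s, f_s⟩ = e^{-2t}` and `-⟨ν_s, f_s⟩ = e^{-t} Im(μ' μ̄'')`, whose quotient is `e^t Im(μ' μ̄'')`.
-/

/-- The ideal cone with vertex ∞ over the plane curve μ, in the Hermitian model. -/
noncomputable def fIC (μ : ℝ → ℂ) (s t : ℝ) : Matrix (Fin 2) (Fin 2) ℂ :=
  !![(Real.exp t : ℂ) + (Real.exp (-t) : ℂ) * (‖μ s‖^2 : ℝ),
     -((Real.exp (-t) : ℂ) * μ s);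
     -((Real.exp (-t) : ℂ) * star (μ s)), (Real.exp (-t) : ℂ)]

/-- The unit normal vector field of the ideal cone `fIC`. -/
noncomputable def nuIC (μ dμ : ℝ → ℂ) (s : ℝ) : Matrix (Fin 2) (Fin 2) ℂ :=
  !![((2 * (star (μ s) * dμ s).im : ℝ) : ℂ), Complex.I * dμ s;
     -(Complex.I * star (dμ s)), 0]

/-- The Minkowski inner product ⟨X,Y⟩ = -(1/2) trace (X Ỹ) on Herm(2). -/
noncomputable def minkM (X Y : Matrix (Fin 2) (Fin 2) ℂ) : ℂ :=
  -(1/2 : ℂ) * (X * Y.adjugate).trace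

theorem minkM_eq_of_apply_one_one_eq_zero {X Y : Matrix (Fin 2) (Fin 2) ℂ}
    (hX : X 1 1 = 0) (hY : Y 1 1 = 0) :
    minkM X Y = (X 0 1 * Y 1 0 + X 1 0 * Y 0 1) / 2 := by
  simp only [minkM, adjugate_fin_two, trace_fin_two, mul_apply, Fin.sum_univ_two, of_apply,
    cons_val', cons_val_zero, cons_val_one, empty_val', cons_val_fin_one, hX, hY]
  ring

section Derivatives

variable {μ dμ : ℝ → ℂ} {s : ℝ}

theorem hasDerivAt_fIC_apply_zero_one {m : ℂ} (hμ : HasDerivAt μ m s) (t : ℝ) :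
    HasDerivAt (fun u => fIC μ u t 0 1) (-((Real.exp (-t) : ℂ) * m)) s :=
  (hμ.const_mul _).neg

theorem hasDerivAt_fIC_apply_one_zero {m : ℂ} (hμ : HasDerivAt μ m s) (t : ℝ) :
    HasDerivAt (fun u => fIC μ u t 1 0) (-((Real.exp (-t) : ℂ) * star m)) s :=
  (hμ.star.const_mul _).neg

theorem hasDerivAt_fIC_apply_one_one (t : ℝ) :
    HasDerivAt (fun u => fIC μ u t 1 1) 0 s :=
  hasDerivAt_const s _

theorem hasDerivAt_nuIC_apply_zero_one {a : ℂ} (hdμ : HasDerivAt dμ a s) :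
    HasDerivAt (fun u => nuIC μ dμ u 0 1) (Complex.I * a) s :=
  hdμ.const_mul _

theorem hasDerivAt_nuIC_apply_one_zero {a : ℂ} (hdμ : HasDerivAt dμ a s) :
    HasDerivAt (fun u => nuIC μ dμ u 1 0) (-(Complex.I * star a)) s :=
  (hdμ.star.const_mul _).neg

theorem hasDerivAt_nuIC_apply_one_one :
    HasDerivAt (fun u => nuIC μ dμ u 1 1) 0 s :=
  hasDerivAt_const s _

variable {fs νs : Matrix (Fin 2) (Fin 2) ℂ} {t : ℝ}

theorem minkM_fIC_deriv_self {m : ℂ} (hμ : HasDerivAt μ m s) (hm : ‖m‖ = 1)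
    (hfs : ∀ i j, HasDerivAt (fun u => fIC μ u t i j) (fs i j) s) :
    minkM fs fs = ((Real.exp (-t) ^ 2 : ℝ) : ℂ) := by
  have hnorm : m * star m = 1 := by simpa [hm] using Complex.mul_conj' m
  have hf11 := (hfs 1 1).unique (hasDerivAt_fIC_apply_one_one t)
  rw [minkM_eq_of_apply_one_one_eq_zero hf11 hf11,
    (hfs 0 1).unique (hasDerivAt_fIC_apply_zero_one hμ t),
    (hfs 1 0).unique (hasDerivAt_fIC_apply_one_zero hμ t), Complex.ofReal_pow]
  linear_combination (Real.exp (-t) : ℂ) ^ 2 * hnorm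

theorem minkM_nuIC_deriv_fIC_deriv {m a : ℂ} (hμ : HasDerivAt μ m s) (hdμ : HasDerivAt dμ a s)
    (hfs : ∀ i j, HasDerivAt (fun u => fIC μ u t i j) (fs i j) s)
    (hνs : ∀ i j, HasDerivAt (fun u => nuIC μ dμ u i j) (νs i j) s) :
    minkM νs fs = ((-(Real.exp (-t) * (m * star a).im) : ℝ) : ℂ) := by
  have him := Complex.sub_conj (m * star a)
  simp only [← Complex.star_def, star_mul', star_star] at him
  rw [minkM_eq_of_apply_one_one_eq_zero ((hνs 1 1).unique hasDerivAt_nuIC_apply_one_one)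
      ((hfs 1 1).unique (hasDerivAt_fIC_apply_one_one t)),
    (hfs 0 1).unique (hasDerivAt_fIC_apply_zero_one hμ t),
    (hfs 1 0).unique (hasDerivAt_fIC_apply_one_zero hμ t),
    (hνs 0 1).unique (hasDerivAt_nuIC_apply_zero_one hdμ),
    (hνs 1 0).unique (hasDerivAt_nuIC_apply_one_zero hdμ), Complex.ofReal_neg, Complex.ofReal_mul]
  push_cast at him
  linear_combination (Complex.I * Real.exp (-t) / 2) * him +
    Real.exp (-t) * (m * star a).im * Complex.I_sq

end Derivatives

theorem stmt_15 (μ dμ ddμ : ℝ → ℂ)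
    (hdμ : ∀ s, HasDerivAt μ (dμ s) s) (hddμ : ∀ s, HasDerivAt dμ (ddμ s) s)
    (hunit : ∀ s, ‖dμ s‖ = 1)
    (s t : ℝ) (fs νs : Matrix (Fin 2) (Fin 2) ℂ)
    (hfs : ∀ i j, HasDerivAt (fun u => fIC μ u t i j) (fs i j) s)
    (hνs : ∀ i j, HasDerivAt (fun u => nuIC μ dμ u i j) (νs i j) s) :
    (1/2 : ℂ) * (-(minkM νs fs)) / minkM fs fs =
      ((-(1/2) * Real.exp t * (-((dμ s * star (ddμ s)).im)) : ℝ) : ℂ) := by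
  rw [minkM_nuIC_deriv_fIC_deriv (hdμ s) (hddμ s) hfs hνs, minkM_fIC_deriv_self (hdμ s) (hunit s) hfs,
    ← Complex.ofReal_one, ← Complex.ofReal_ofNat, ← Complex.ofReal_div, ← Complex.ofReal_neg,
    ← Complex.ofReal_mul, ← Complex.ofReal_div, Complex.ofReal_inj, Real.exp_neg]
  field_simp
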